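/- For continuous functions f_1,...,f_{r+s} : [0,1] → ℝ, the product of time-ordered integrals satisfies the shuffle formula: I(f_1,...,f_r) · I(f_{r+1},...,f_{r+s}) = Σ_{σ ∈ sh(r,s)} I(f_{σ(1)},...,f_{σ(r+s)}), where sh(r,s) is the set of (r,s)-shuffles. -/
import Mathlib

open MeasureTheory

/-- The time-ordered simplex integral `I(f_1,…,f_n) = ∫_{0 ≤ t_1 ≤ ⋯ ≤ t_n ≤ 1} ∏ f_i(t_i)`. -/
noncomputable def timeOrderedIntegral (n : ℕ) (f : Fin n → ℝ → ℝ) : ℝ :=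
  ∫ t in {t : Fin n → ℝ | (∀ i, t i ∈ Set.Icc (0 : ℝ) 1) ∧
      ∀ i j : Fin n, i ≤ j → t i ≤ t j}, ∏ i, f i (t i)

/-- `σ` is an `(r,s)`-shuffle: `σ⁻¹(1) < ⋯ < σ⁻¹(r)` and `σ⁻¹(r+1) < ⋯ < σ⁻¹(r+s)`. -/
def IsShuffle (r s : ℕ) (σ : Equiv.Perm (Fin (r + s))) : Prop :=
  (∀ i j : Fin r, i < j → σ⁻¹ (Fin.castAdd s i) < σ⁻¹ (Fin.castAdd s j)) ∧
  (∀ i j : Fin s, i < j → σ⁻¹ (Fin.natAdd r i) < σ⁻¹ (Fin.natAdd r j))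

namespace ShuffleAux

/-- The ordered simplex. -/
def simplex (n : ℕ) : Set (Fin n → ℝ) :=
  {t : Fin n → ℝ | (∀ i, t i ∈ Set.Icc (0 : ℝ) 1) ∧ ∀ i j : Fin n, i ≤ j → t i ≤ t j}

lemma timeOrderedIntegral_eq (n : ℕ) (f : Fin n → ℝ → ℝ) :
    timeOrderedIntegral n f = ∫ t in simplex n, ∏ i, f i (t i) := rfl

/-- The region where `u ∘ σ` is nondecreasing, inside the cube. -/
def permSet (n : ℕ) (σ : Equiv.Perm (Fin n)) : Set (Fin n → ℝ) :=
  {u : Fin n → ℝ | (∀ i, u i ∈ Set.Icc (0 : ℝ) 1) ∧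
    ∀ k l : Fin n, k ≤ l → u (σ k) ≤ u (σ l)}

def cube (n : ℕ) : Set (Fin n → ℝ) := {u : Fin n → ℝ | ∀ i, u i ∈ Set.Icc (0 : ℝ) 1}

lemma isCompact_cube (n : ℕ) : IsCompact (cube n) := by
  have : cube n = Set.pi Set.univ (fun _ : Fin n => Set.Icc (0 : ℝ) 1) := by
    ext u; simp [cube, Set.mem_pi, Pi.le_def, forall_and]
  rw [this]
  exact isCompact_univ_pi fun _ => isCompact_Icc

lemma simplex_eq_permSet_one (n : ℕ) : simplex n = permSet n 1 := rfl

lemma isClosed_cube (n : ℕ) : IsClosed (cube n) := by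
  have : cube n = ⋂ i, (fun u : Fin n → ℝ => u i) ⁻¹' Set.Icc (0 : ℝ) 1 := by
    ext u; simp [cube]
  rw [this]
  exact isClosed_iInter fun i => isClosed_Icc.preimage (continuous_apply i)

lemma isClosed_permSet (n : ℕ) (σ : Equiv.Perm (Fin n)) : IsClosed (permSet n σ) := by
  have h2 : IsClosed {u : Fin n → ℝ | ∀ k l : Fin n, k ≤ l → u (σ k) ≤ u (σ l)} := by
    have : {u : Fin n → ℝ | ∀ k l : Fin n, k ≤ l → u (σ k) ≤ u (σ l)}
        = ⋂ (k : Fin n), ⋂ (l : Fin n), {u : Fin n → ℝ | k ≤ l → u (σ k) ≤ u (σ l)} := by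
      ext u; simp
    rw [this]
    refine isClosed_iInter fun k => isClosed_iInter fun l => ?_
    by_cases h : k ≤ l
    · have : {u : Fin n → ℝ | k ≤ l → u (σ k) ≤ u (σ l)}
          = {u : Fin n → ℝ | u (σ k) ≤ u (σ l)} := by ext u; simp [h]
      rw [this]
      exact isClosed_le (continuous_apply _) (continuous_apply _)
    · have : {u : Fin n → ℝ | k ≤ l → u (σ k) ≤ u (σ l)} = Set.univ := by
        ext u; simp [h]
      rw [this]; exact isClosed_univ
  exact (isClosed_cube n).inter h2

lemma isClosed_simplex (n : ℕ) : IsClosed (simplex n) := by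
  rw [simplex_eq_permSet_one]; exact isClosed_permSet n 1

lemma permSet_subset_cube (n : ℕ) (σ : Equiv.Perm (Fin n)) : permSet n σ ⊆ cube n :=
  fun _ hu => hu.1

/-- The integral over a `permSet` is the time-ordered integral of the permuted functions. -/
lemma integral_permSet (n : ℕ) (F : Fin n → ℝ → ℝ) (σ : Equiv.Perm (Fin n)) :
    ∫ u in permSet n σ, ∏ i, F i (u i) = timeOrderedIntegral n (fun k => F (σ k)) := by
  set φ := MeasurableEquiv.piCongrLeft (fun _ : Fin n => ℝ) (σ : Fin n ≃ Fin n) with hφdef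
  have hφ : ∀ (t : Fin n → ℝ) (j : Fin n), φ t j = t (σ.symm j) := by
    intro t j
    conv_lhs => rw [show j = σ (σ.symm j) by simp]
    rw [MeasurableEquiv.piCongrLeft_apply_apply]
  have hmp : MeasurePreserving φ volume volume :=
    volume_measurePreserving_piCongrLeft (fun _ => ℝ) _
  rw [← hmp.setIntegral_preimage_emb φ.measurableEmbedding]
  have hset : φ ⁻¹' permSet n σ = simplex n := by
    ext t
    simp only [Set.mem_preimage, permSet, simplex, Set.mem_setOf_eq]
    constructor
    · rintro ⟨h1, h2⟩
      refine ⟨fun i => ?_, fun i j hij => ?_⟩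
      · have := h1 (σ i)
        rwa [hφ, Equiv.symm_apply_apply] at this
      · have := h2 i j hij
        rwa [hφ, hφ, Equiv.symm_apply_apply, Equiv.symm_apply_apply] at this
    · rintro ⟨h1, h2⟩
      refine ⟨fun i => ?_, fun k l hkl => ?_⟩
      · rw [hφ]; exact h1 _
      · rw [hφ, hφ, Equiv.symm_apply_apply, Equiv.symm_apply_apply]
        exact h2 k l hkl
  rw [hset, timeOrderedIntegral_eq]
  refine setIntegral_congr_fun ?_ fun t _ => ?_
  · exact (isClosed_simplex n).measurableSet
  · simp_rw [hφ]
    rw [← Equiv.prod_comp σ (fun i => F i (t (σ.symm i)))]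
    simp

/-- The combined region for the product of two simplex integrals. -/
def prodSet (r s : ℕ) : Set (Fin (r + s) → ℝ) :=
  {u : Fin (r + s) → ℝ | (fun i => u (Fin.castAdd s i)) ∈ simplex r ∧
    (fun j => u (Fin.natAdd r j)) ∈ simplex s}

lemma prod_eq_integral_prodSet (r s : ℕ) (F : Fin (r + s) → ℝ → ℝ) :
    timeOrderedIntegral r (fun i => F (Fin.castAdd s i)) *
      timeOrderedIntegral s (fun j => F (Fin.natAdd r j)) =
    ∫ u in prodSet r s, ∏ i, F i (u i) := by
  set ψ := ((MeasurableEquiv.piCongrLeft (fun _ : Fin (r + s) => ℝ) finSumFinEquiv).symm).trans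
    (MeasurableEquiv.sumPiEquivProdPi (fun _ => ℝ)) with hψdef
  have hψ : MeasurePreserving ψ volume volume :=
    (volume_measurePreserving_sumPiEquivProdPi (fun _ : Fin r ⊕ Fin s => ℝ)).comp
      ((volume_measurePreserving_piCongrLeft (fun _ : Fin (r + s) => ℝ) finSumFinEquiv).symm _)
  have key := hψ.setIntegral_preimage_emb ψ.measurableEmbedding
    (fun p : (Fin r → ℝ) × (Fin s → ℝ) =>
      (∏ i, F (Fin.castAdd s i) (p.1 i)) * ∏ j, F (Fin.natAdd r j) (p.2 j))
    (simplex r ×ˢ simplex s)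
  rw [timeOrderedIntegral_eq, timeOrderedIntegral_eq]
  have hprod : (∫ t in simplex r, ∏ i, F (Fin.castAdd s i) (t i)) *
      ∫ t in simplex s, ∏ j, F (Fin.natAdd r j) (t j)
      = ∫ p in simplex r ×ˢ simplex s,
          (∏ i, F (Fin.castAdd s i) (p.1 i)) * ∏ j, F (Fin.natAdd r j) (p.2 j) := by
    rw [Measure.volume_eq_prod, ← Measure.prod_restrict]
    exact (integral_prod_mul (fun t : Fin r → ℝ => ∏ i, F (Fin.castAdd s i) (t i))
      (fun t : Fin s → ℝ => ∏ j, F (Fin.natAdd r j) (t j))).symm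
  rw [hprod, ← key]
  have hpre : ψ ⁻¹' (simplex r ×ˢ simplex s) = prodSet r s := rfl
  rw [hpre]
  refine setIntegral_congr_fun ?_ fun u _ => ?_
  · exact hpre ▸ (((isClosed_simplex r).measurableSet.prod
      (isClosed_simplex s).measurableSet).preimage ψ.measurable)
  · show (∏ i, F (Fin.castAdd s i) ((ψ u).1 i)) * ∏ j, F (Fin.natAdd r j) ((ψ u).2 j)
      = ∏ i, F i (u i)
    have h1 : ∀ i, (ψ u).1 i = u (Fin.castAdd s i) := fun i => rfl
    have h2 : ∀ j, (ψ u).2 j = u (Fin.natAdd r j) := fun j => rfl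
    simp_rw [h1, h2]
    exact (Fin.prod_univ_add (f := fun k => F k (u k))).symm

lemma volume_pair_eq (n : ℕ) {i j : Fin n} (hij : i ≠ j) :
    volume {u : Fin n → ℝ | u i = u j} = 0 := by
  have hker : {u : Fin n → ℝ | u i = u j}
      = (LinearMap.ker ((LinearMap.proj i : (Fin n → ℝ) →ₗ[ℝ] ℝ) - LinearMap.proj j) :
          Submodule ℝ (Fin n → ℝ)) := by
    ext u
    simp [LinearMap.mem_ker, sub_eq_zero]
  rw [hker]
  refine Measure.addHaar_submodule _ _ fun h => ?_
  have hmem : (Pi.single i (1 : ℝ)) ∈ LinearMap.ker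
      ((LinearMap.proj i : (Fin n → ℝ) →ₗ[ℝ] ℝ) - LinearMap.proj j) := h ▸ Submodule.mem_top
  simp [LinearMap.mem_ker, sub_eq_zero, Pi.single_eq_same,
    Pi.single_eq_of_ne hij.symm] at hmem

lemma volume_nonInj (n : ℕ) : volume {u : Fin n → ℝ | ¬ Function.Injective u} = 0 := by
  have hsub : {u : Fin n → ℝ | ¬ Function.Injective u}
      ⊆ ⋃ (p : Fin n × Fin n) (_ : p.1 ≠ p.2), {u : Fin n → ℝ | u p.1 = u p.2} := by
    intro u hu
    simp only [Set.mem_setOf_eq, Function.Injective, not_forall] at hu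
    obtain ⟨a, b, hab, hne⟩ := hu
    simp only [Set.mem_iUnion]
    exact ⟨(a, b), hne, hab⟩
  exact measure_mono_null hsub
    (measure_iUnion_null fun p => measure_iUnion_null fun hp => volume_pair_eq n hp)

lemma measurableSet_nonInj (n : ℕ) :
    MeasurableSet {u : Fin n → ℝ | ¬ Function.Injective u} := by
  have heq : {u : Fin n → ℝ | ¬ Function.Injective u}
      = ⋃ (i : Fin n), ⋃ (j : Fin n), ⋃ (_ : i ≠ j), {u : Fin n → ℝ | u i = u j} := by
    ext u
    simp only [Set.mem_setOf_eq, Set.mem_iUnion, Function.Injective, not_forall]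
    exact ⟨fun ⟨a, b, hab, hne⟩ => ⟨a, b, hne, hab⟩, fun ⟨a, b, hne, hab⟩ => ⟨a, b, hab, hne⟩⟩
  rw [heq]
  exact MeasurableSet.iUnion fun i => MeasurableSet.iUnion fun j =>
    MeasurableSet.iUnion fun _ =>
      (isClosed_eq (continuous_apply i) (continuous_apply j)).measurableSet

lemma perm_unique {n : ℕ} {u : Fin n → ℝ} (hinj : Function.Injective u)
    {σ τ : Equiv.Perm (Fin n)} (hσ : u ∈ permSet n σ) (hτ : u ∈ permSet n τ) : σ = τ := by
  have h1 : StrictMono (u ∘ σ) :=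
    Monotone.strictMono_of_injective (fun k l hkl => hσ.2 k l hkl) (hinj.comp σ.injective)
  have h2 : StrictMono (u ∘ τ) :=
    Monotone.strictMono_of_injective (fun k l hkl => hτ.2 k l hkl) (hinj.comp τ.injective)
  have hr : Set.range (u ∘ σ) = Set.range (u ∘ τ) := by
    rw [Set.range_comp, Set.range_comp, Equiv.range_eq_univ, Equiv.range_eq_univ]
  have inst : WellFoundedLT (Fin n) := inferInstance
  have heq : u ∘ ⇑σ = u ∘ ⇑τ := (StrictMono.range_inj h1 h2).mp hr
  ext k
  exact congrArg Fin.val (hinj (congrFun heq k))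

lemma mem_prodSet_of_shuffle {r s : ℕ} {σ : Equiv.Perm (Fin (r + s))} (hσ : IsShuffle r s σ)
    {u : Fin (r + s) → ℝ} (hu : u ∈ permSet (r + s) σ) : u ∈ prodSet r s := by
  obtain ⟨hc, hm⟩ := hu
  refine ⟨⟨fun i => hc _, fun i j hij => ?_⟩, ⟨fun j => hc _, fun i j hij => ?_⟩⟩
  · rcases eq_or_lt_of_le hij with rfl | hlt
    · exact le_refl _
    · have := hm _ _ (le_of_lt (hσ.1 i j hlt))
      simpa using this
  · rcases eq_or_lt_of_le hij with rfl | hlt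
    · exact le_refl _
    · have := hm _ _ (le_of_lt (hσ.2 i j hlt))
      simpa using this

lemma sort_shuffle {r s : ℕ} {u : Fin (r + s) → ℝ} (hinj : Function.Injective u)
    (hu : u ∈ prodSet r s) :
    IsShuffle r s (Tuple.sort u) ∧ u ∈ permSet (r + s) (Tuple.sort u) := by
  have hmono : Monotone (u ∘ (Tuple.sort u)) := Tuple.monotone_sort u
  have hstrict : StrictMono (u ∘ (Tuple.sort u)) :=
    hmono.strictMono_of_injective (hinj.comp (Tuple.sort u).injective)
  obtain ⟨⟨hc1, hm1⟩, hc2, hm2⟩ := hu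
  have hcube : ∀ k, u k ∈ Set.Icc (0 : ℝ) 1 := fun k => Fin.addCases hc1 hc2 k
  have key : ∀ x y : Fin (r + s), u x < u y →
      (Tuple.sort u)⁻¹ x < (Tuple.sort u)⁻¹ y := by
    intro x y hxy
    refine hstrict.lt_iff_lt.mp ?_
    show u ((Tuple.sort u) ((Tuple.sort u)⁻¹ x)) < u ((Tuple.sort u) ((Tuple.sort u)⁻¹ y))
    simpa using hxy
  refine ⟨⟨fun i j hij => key _ _ ?_, fun i j hij => key _ _ ?_⟩,
    hcube, fun k l hkl => hmono hkl⟩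
  · refine lt_of_le_of_ne (hm1 i j (le_of_lt hij)) fun h => ?_
    have hv := congrArg Fin.val (hinj h)
    simp only [Fin.coe_castAdd] at hv
    exact (ne_of_lt hij) (Fin.ext hv)
  · refine lt_of_le_of_ne (hm2 i j (le_of_lt hij)) fun h => ?_
    have hv := congrArg Fin.val (hinj h)
    simp only [Fin.coe_natAdd, Nat.add_right_cancel_iff, add_right_inj] at hv
    exact (ne_of_lt hij) (Fin.ext hv)

end ShuffleAux

open Classical in
/-- the shuffle product formula for time-ordered integrals. -/
theorem timeOrderedIntegral_shuffle (r s : ℕ) (F : Fin (r + s) → ℝ → ℝ)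
    (hF : ∀ i, Continuous (F i)) :
    timeOrderedIntegral r (fun i => F (Fin.castAdd s i)) *
      timeOrderedIntegral s (fun j => F (Fin.natAdd r j)) =
    ∑ σ : Equiv.Perm (Fin (r + s)),
      if IsShuffle r s σ then timeOrderedIntegral (r + s) (fun k => F (σ k)) else 0 := by
  classical
  have hnull := ShuffleAux.volume_nonInj (r + s)
  set N := {u : Fin (r + s) → ℝ | ¬ Function.Injective u} with hN
  have hgc : Continuous (fun u : Fin (r + s) → ℝ => ∏ i, F i (u i)) :=
    continuous_finset_prod _ fun i _ => (hF i).comp (continuous_apply i)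
  have hint : IntegrableOn (fun u : Fin (r + s) → ℝ => ∏ i, F i (u i))
      (ShuffleAux.cube (r + s)) :=
    hgc.continuousOn.integrableOn_compact (ShuffleAux.isCompact_cube _)
  rw [ShuffleAux.prod_eq_integral_prodSet]
  have hsum : (∑ σ : Equiv.Perm (Fin (r + s)),
        if IsShuffle r s σ then timeOrderedIntegral (r + s) (fun k => F (σ k)) else 0)
      = ∑ σ ∈ Finset.univ.filter (fun σ => IsShuffle r s σ),
          timeOrderedIntegral (r + s) (fun k => F (σ k)) :=
    (Finset.sum_filter _ _).symm
  rw [hsum]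
  have hdiff : ∀ A : Set (Fin (r + s) → ℝ), (A \ N : Set _) =ᵐ[volume] A := fun A => by
    rw [diff_ae_eq_self]
    exact measure_mono_null Set.inter_subset_right hnull
  have h1 : ∫ u in ShuffleAux.prodSet r s, ∏ i, F i (u i)
      = ∫ u in ShuffleAux.prodSet r s \ N, ∏ i, F i (u i) :=
    (setIntegral_congr_set (hdiff _)).symm
  have hcover : ShuffleAux.prodSet r s \ N
      = ⋃ σ ∈ Finset.univ.filter (fun σ : Equiv.Perm (Fin (r + s)) => IsShuffle r s σ),
          (ShuffleAux.permSet (r + s) σ \ N) := by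
    ext u
    simp only [Set.mem_diff, Set.mem_iUnion, Finset.mem_filter, Finset.mem_univ, true_and,
      hN, Set.mem_setOf_eq, not_not]
    constructor
    · rintro ⟨hu, hinj⟩
      obtain ⟨hs1, hs2⟩ := ShuffleAux.sort_shuffle hinj hu
      exact ⟨_, hs1, hs2, hinj⟩
    · rintro ⟨σ, hσ, hu, hinj⟩
      exact ⟨ShuffleAux.mem_prodSet_of_shuffle hσ hu, hinj⟩
  rw [h1, hcover, integral_biUnion_finset _
    (fun σ _ => ((ShuffleAux.isClosed_permSet _ σ).measurableSet.diff
      (ShuffleAux.measurableSet_nonInj _)))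
    (fun σ _ τ _ hne => Set.disjoint_left.mpr fun u hu1 hu2 =>
      hne (ShuffleAux.perm_unique (not_not.mp hu1.2) hu1.1 hu2.1))
    (fun σ _ => hint.mono_set fun u hu => hu.1.1)]
  refine Finset.sum_congr rfl fun σ hσ => ?_
  rw [setIntegral_congr_set (hdiff _), ShuffleAux.integral_permSet]
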